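/- arXiv:1708.00557 — 2 statements merged into one kernel-verified Lean document; each statement's English description precedes it below -/
import Mathlib

section
/- Let A ∈ ℝ^{m×n}, x ∈ ℝ^n, r ∈ ℝ^m with r ≠ 0, M a symmetric invertible n×n matrix, and K as in the STLS condition-number formula. Define W = [Aᵀ, ‖x‖ Aᵀ(I_m − (1/‖r‖²) r rᵀ), ‖r‖(I_n − (1/‖r‖²) Aᵀ r xᵀ)] ∈ ℝ^{n×(2m+n)}. Then K Kᵀ = M⁻¹ W Wᵀ M⁻¹, and consequently ‖K‖₂ = ‖M⁻¹ W‖₂. -/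
open Matrix Kronecker

/-- The Euclidean norm of a real vector. -/
noncomputable def vecEnorm {n : Type*} [Fintype n] (v : n → ℝ) : ℝ :=
  Real.sqrt (∑ i, v i ^ 2)

/-- The spectral (operator 2-)norm of a real matrix. -/
noncomputable def specNorm {m n : Type*} [Fintype m] [Fintype n] [DecidableEq n]
    (A : Matrix m n ℝ) : ℝ :=
  ‖LinearMap.toContinuousLinearMap (Matrix.toEuclideanLin A)‖

/-- The row vector `[xᵀ, −1]` of length `n+1`. -/
def rowAug {n : ℕ} (x : Fin n → ℝ) : Matrix Unit (Fin n ⊕ Unit) ℝ :=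
  Matrix.of fun _ j => Sum.elim x (fun _ => (-1 : ℝ)) j

/-- The STLS Fréchet derivative matrix
`K = M⁻¹(((2/‖r‖²)Aᵀ r rᵀ − Aᵀ)([xᵀ,−1] ⊗ I_m) − [I_n ⊗ rᵀ, 0_{n×m}])`. -/
noncomputable def KSTLS {m n : ℕ} (A : Matrix (Fin m) (Fin n) ℝ) (x : Fin n → ℝ)
    (r : Fin m → ℝ) (M : Matrix (Fin n) (Fin n) ℝ) :
    Matrix (Fin n) ((Fin n ⊕ Unit) × Fin m) ℝ :=
  M⁻¹ *
    (((2 / vecEnorm r ^ 2) • (Aᵀ * vecMulVec r r) - Aᵀ) *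
        Matrix.reindex (Equiv.punitProd (Fin m)) (Equiv.refl _)
          (rowAug x ⊗ₖ (1 : Matrix (Fin m) (Fin m) ℝ)) -
      Matrix.reindex (Equiv.prodPUnit (Fin n))
        ((Equiv.sumProdDistrib (Fin n) Unit (Fin m)).symm)
        (fromCols ((1 : Matrix (Fin n) (Fin n) ℝ) ⊗ₖ Matrix.of (fun (_ : Unit) k => r k))
          (0 : Matrix (Fin n × Unit) (Unit × Fin m) ℝ)))

/-- The matrix `W = [Aᵀ, ‖x‖Aᵀ(I − (1/‖r‖²)rrᵀ), ‖r‖(I − (1/‖r‖²)Aᵀ r xᵀ)]`. -/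
noncomputable def WSTLS {m n : ℕ} (A : Matrix (Fin m) (Fin n) ℝ) (x : Fin n → ℝ)
    (r : Fin m → ℝ) : Matrix (Fin n) (Fin m ⊕ (Fin m ⊕ Fin n)) ℝ :=
  fromCols Aᵀ
    (fromCols
      (vecEnorm x • (Aᵀ * ((1 : Matrix (Fin m) (Fin m) ℝ) - (1 / vecEnorm r ^ 2) • vecMulVec r r)))
      (vecEnorm r • ((1 : Matrix (Fin n) (Fin n) ℝ) - (1 / vecEnorm r ^ 2) • (Aᵀ * vecMulVec r x))))

/-!
Write `K = M⁻¹ N` with `N = Aᵀ H E − D`, where `H = 2 r rᵀ / ‖r‖² − I` is the reflection through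
the line `ℝ r` (`lineReflection`), `E = [xᵀ, −1] ⊗ I_m` (`augKronOne`) and
`D = [I_n ⊗ rᵀ, 0]` (`oneKronRow`). From `H² = I`, `H r = r`, `E Eᵀ = (‖x‖² + 1) I`,
`E Dᵀ = r xᵀ` and `D Dᵀ = ‖r‖² I`, the Gram matrix `N Nᵀ` collapses to
`(‖x‖² + 1) AᵀA − (Aᵀr) xᵀ − x (Aᵀr)ᵀ + ‖r‖² I` (`stlsGram`), and expanding `W Wᵀ` block by
block gives the same matrix. Conjugating by the symmetric `M⁻¹` gives `K Kᵀ = M⁻¹ W Wᵀ M⁻¹`,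
and `‖B‖₂² = ‖B Bᵀ‖₂` turns this into the equality of spectral norms.
-/

lemma vecEnorm_sq {ι : Type*} [Fintype ι] (v : ι → ℝ) : vecEnorm v ^ 2 = v ⬝ᵥ v := by
  rw [vecEnorm, Real.sq_sqrt (by positivity)]
  simp only [dotProduct, sq]

lemma vecEnorm_mul_self {ι : Type*} [Fintype ι] (v : ι → ℝ) :
    vecEnorm v * vecEnorm v = v ⬝ᵥ v := by
  rw [← sq, vecEnorm_sq]

open scoped Matrix.Norms.L2Operator in
lemma specNorm_mul_self {p q : Type*} [Fintype p] [Fintype q] [DecidableEq p] [DecidableEq q]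
    (B : Matrix p q ℝ) : specNorm B * specNorm B = ‖B * Bᵀ‖ := by
  have h := l2_opNorm_conjTranspose_mul_self Bᴴ
  rw [conjTranspose_conjTranspose, l2_opNorm_conjTranspose,
    conjTranspose_eq_transpose_of_trivial] at h
  exact h.symm

lemma specNorm_eq_of_mul_transpose_eq {p q q' : Type*} [Fintype p] [Fintype q] [Fintype q']
    [DecidableEq p] [DecidableEq q] [DecidableEq q'] {B : Matrix p q ℝ} {C : Matrix p q' ℝ}
    (h : B * Bᵀ = C * Cᵀ) : specNorm B = specNorm C :=
  (mul_self_inj (norm_nonneg _) (norm_nonneg _)).mp <|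
    (specNorm_mul_self B).trans (h ▸ (specNorm_mul_self C).symm)

lemma mul_mul_transpose_of_transpose_eq {R p q : Type*} [CommRing R] [Fintype p] [Fintype q]
    {S : Matrix p p R} (hS : Sᵀ = S) (N : Matrix p q R) :
    S * N * (S * N)ᵀ = S * (N * Nᵀ) * S := by
  rw [transpose_mul, hS, Matrix.mul_assoc, Matrix.mul_assoc, Matrix.mul_assoc]

lemma smul_mul_transpose_smul {R p q : Type*} [CommRing R] [Fintype q] (a : R)
    (P : Matrix p q R) : a • P * (a • P)ᵀ = (a * a) • (P * Pᵀ) := by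
  rw [transpose_smul, Matrix.smul_mul, Matrix.mul_smul, smul_smul]

section Gram

variable {R : Type*} [Field R] {l m n q : Type*} [Fintype m] [DecidableEq m] [Fintype n]
  [DecidableEq n] [Fintype q]

def lineReflection (r : m → R) : Matrix m m R :=
  (2 / (r ⬝ᵥ r)) • vecMulVec r r - 1

lemma transpose_lineReflection (r : m → R) : (lineReflection r)ᵀ = lineReflection r := by
  simp only [lineReflection, transpose_sub, transpose_smul, transpose_vecMulVec, transpose_one]

lemma lineReflection_mul_vecMulVec {r : m → R} (hr : r ⬝ᵥ r ≠ 0) (x : l → R) :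
    lineReflection r * vecMulVec r x = vecMulVec r x := by
  rw [lineReflection, Matrix.sub_mul, Matrix.smul_mul, vecMulVec_mul_vecMulVec, vecMulVec_smul,
    smul_smul, div_mul_cancel₀ _ hr, two_smul, Matrix.one_mul, add_sub_cancel_right]

lemma lineReflection_mul_self {r : m → R} (hr : r ⬝ᵥ r ≠ 0) :
    lineReflection r * lineReflection r = 1 := by
  nth_rw 2 [lineReflection]
  rw [Matrix.mul_sub, Matrix.mul_smul, lineReflection_mul_vecMulVec hr, Matrix.mul_one,
    lineReflection, sub_sub_cancel]

def stlsGram (A : Matrix m n R) (x : n → R) (r : m → R) : Matrix n n R :=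
  (x ⬝ᵥ x + 1) • (Aᵀ * A) - vecMulVec (Aᵀ *ᵥ r) x - vecMulVec x (Aᵀ *ᵥ r) + (r ⬝ᵥ r) • 1

lemma mul_transpose_reflection_sub_eq_stlsGram (A : Matrix m n R) (x : n → R) {r : m → R}
    (hr : r ⬝ᵥ r ≠ 0) {E : Matrix m q R} {D : Matrix n q R}
    (hE : E * Eᵀ = (x ⬝ᵥ x + 1) • 1) (hED : E * Dᵀ = vecMulVec r x)
    (hD : D * Dᵀ = (r ⬝ᵥ r) • 1) :
    (Aᵀ * lineReflection r * E - D) * (Aᵀ * lineReflection r * E - D)ᵀ = stlsGram A x r := by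
  set B := Aᵀ * lineReflection r
  have hBB : B * Bᵀ = Aᵀ * A := by
    rw [transpose_mul, transpose_lineReflection, transpose_transpose, Matrix.mul_assoc,
      ← Matrix.mul_assoc (lineReflection r), lineReflection_mul_self hr, Matrix.one_mul]
  have hBrx : B * vecMulVec r x = vecMulVec (Aᵀ *ᵥ r) x := by
    rw [Matrix.mul_assoc, lineReflection_mul_vecMulVec hr, mul_vecMulVec]
  calc (B * E - D) * (B * E - D)ᵀ
      = B * (E * Eᵀ) * Bᵀ - B * (E * Dᵀ) - (B * (E * Dᵀ))ᵀ + D * Dᵀ := by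
        simp only [transpose_sub, transpose_mul, transpose_transpose, Matrix.sub_mul,
          Matrix.mul_sub, Matrix.mul_assoc]
        abel
    _ = stlsGram A x r := by
        rw [hE, hED, hD, hBrx, Matrix.mul_smul, Matrix.mul_one, Matrix.smul_mul, hBB,
          transpose_vecMulVec, stlsGram]

end Gram

lemma WSTLS_mul_transpose {m n : ℕ} (A : Matrix (Fin m) (Fin n) ℝ) (x : Fin n → ℝ)
    {r : Fin m → ℝ} (hr : r ≠ 0) : WSTLS A x r * (WSTLS A x r)ᵀ = stlsGram A x r := by
  have hS : r ⬝ᵥ r ≠ 0 := by simpa using hr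
  have hu : r ᵥ* A = Aᵀ *ᵥ r := (mulVec_transpose A r).symm
  have hP : Aᵀ * (1 - (1 / vecEnorm r ^ 2) • vecMulVec r r) =
      Aᵀ - (1 / r ⬝ᵥ r) • vecMulVec (Aᵀ *ᵥ r) r := by
    rw [Matrix.mul_sub, Matrix.mul_one, Matrix.mul_smul, mul_vecMulVec, vecEnorm_sq]
  have hQ : (1 : Matrix (Fin n) (Fin n) ℝ) - (1 / vecEnorm r ^ 2) • (Aᵀ * vecMulVec r x) =
      1 - (1 / r ⬝ᵥ r) • vecMulVec (Aᵀ *ᵥ r) x := by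
    rw [mul_vecMulVec, vecEnorm_sq]
  rw [WSTLS, hP, hQ, transpose_fromCols, fromCols_mul_fromRows, transpose_fromCols,
    fromCols_mul_fromRows, smul_mul_transpose_smul, smul_mul_transpose_smul, vecEnorm_mul_self,
    vecEnorm_mul_self]
  simp only [stlsGram, transpose_transpose, transpose_sub, transpose_one, transpose_smul,
    transpose_vecMulVec, Matrix.mul_sub, Matrix.sub_mul, Matrix.mul_one, Matrix.one_mul,
    Matrix.smul_mul, Matrix.mul_smul, vecMulVec_mul_vecMulVec]
  simp only [mul_vecMulVec, vecMulVec_mul, vecMulVec_smul, hu, smul_smul]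
  match_scalars <;> field_simp <;> ring

def augKronOne (m : Type*) [DecidableEq m] {n : ℕ} (x : Fin n → ℝ) :
    Matrix m ((Fin n ⊕ Unit) × m) ℝ :=
  reindex (Equiv.punitProd m) (Equiv.refl _) (rowAug x ⊗ₖ (1 : Matrix m m ℝ))

def oneKronRow {m : Type*} (n : ℕ) (r : m → ℝ) : Matrix (Fin n) ((Fin n ⊕ Unit) × m) ℝ :=
  reindex (Equiv.prodPUnit (Fin n)) ((Equiv.sumProdDistrib (Fin n) Unit m).symm)
    (fromCols ((1 : Matrix (Fin n) (Fin n) ℝ) ⊗ₖ of (fun (_ : Unit) k => r k)) 0)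

section Kronecker

variable {m : Type*} [Fintype m] {n : ℕ}

lemma augKronOne_mul_transpose [DecidableEq m] (x : Fin n → ℝ) :
    augKronOne m x * (augKronOne m x)ᵀ = (x ⬝ᵥ x + 1) • (1 : Matrix m m ℝ) := by
  ext k k'
  by_cases h : k = k' <;>
    simp [augKronOne, rowAug, h, mul_apply, one_apply, Fintype.sum_prod_type,
      Fintype.sum_sum_type, dotProduct]

lemma oneKronRow_mul_transpose (r : m → ℝ) :
    oneKronRow n r * (oneKronRow n r)ᵀ = (r ⬝ᵥ r) • (1 : Matrix (Fin n) (Fin n) ℝ) := by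
  ext i i'
  by_cases h : i = i' <;>
    simp [oneKronRow, h, mul_apply, one_apply, Fintype.sum_prod_type, Fintype.sum_sum_type,
      Equiv.sumProdDistrib, dotProduct]

lemma augKronOne_mul_transpose_oneKronRow [DecidableEq m] (x : Fin n → ℝ) (r : m → ℝ) :
    augKronOne m x * (oneKronRow n r)ᵀ = vecMulVec r x := by
  ext k i
  simp [augKronOne, oneKronRow, rowAug, mul_apply, one_apply, Fintype.sum_prod_type,
    Fintype.sum_sum_type, Equiv.sumProdDistrib, vecMulVec_apply, mul_comm]

end Kronecker

lemma KSTLS_eq {m n : ℕ} (A : Matrix (Fin m) (Fin n) ℝ) (x : Fin n → ℝ) (r : Fin m → ℝ)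
    (M : Matrix (Fin n) (Fin n) ℝ) :
    KSTLS A x r M = M⁻¹ * (Aᵀ * lineReflection r * augKronOne (Fin m) x - oneKronRow n r) := by
  have hB : Aᵀ * lineReflection r = (2 / vecEnorm r ^ 2) • (Aᵀ * vecMulVec r r) - Aᵀ := by
    rw [lineReflection, vecEnorm_sq, Matrix.mul_sub, Matrix.mul_smul, Matrix.mul_one]
  rw [hB]
  rfl

theorem KSTLS_eq_W_form_general {m n : ℕ} (A : Matrix (Fin m) (Fin n) ℝ) (x : Fin n → ℝ)
    (r : Fin m → ℝ) (M : Matrix (Fin n) (Fin n) ℝ) (hMs : Mᵀ = M)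
    (hr : r ≠ 0) :
    KSTLS A x r M * (KSTLS A x r M)ᵀ = M⁻¹ * WSTLS A x r * (WSTLS A x r)ᵀ * M⁻¹ ∧
      specNorm (KSTLS A x r M) = specNorm (M⁻¹ * WSTLS A x r) := by
  have hS : r ⬝ᵥ r ≠ 0 := by simpa using hr
  have hMinv : (M⁻¹)ᵀ = M⁻¹ := by rw [transpose_nonsing_inv, hMs]
  have hNW := (mul_transpose_reflection_sub_eq_stlsGram A x hS (augKronOne_mul_transpose x)
    (augKronOne_mul_transpose_oneKronRow x r) (oneKronRow_mul_transpose r)).trans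
    (WSTLS_mul_transpose A x hr).symm
  have hK : KSTLS A x r M * (KSTLS A x r M)ᵀ = M⁻¹ * WSTLS A x r * (WSTLS A x r)ᵀ * M⁻¹ := by
    rw [KSTLS_eq, mul_mul_transpose_of_transpose_eq hMinv, hNW]
    simp only [Matrix.mul_assoc]
  refine ⟨hK, specNorm_eq_of_mul_transpose_eq ?_⟩
  rw [hK, mul_mul_transpose_of_transpose_eq hMinv]
  simp only [Matrix.mul_assoc]

/-- Theorem 2.3: `K Kᵀ = M⁻¹ W Wᵀ M⁻¹`, and hence `‖K‖₂ = ‖M⁻¹ W‖₂`. -/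
theorem KSTLS_eq_W_form {m n : ℕ} (A : Matrix (Fin m) (Fin n) ℝ) (x : Fin n → ℝ)
    (r : Fin m → ℝ) (M : Matrix (Fin n) (Fin n) ℝ) (hM : IsUnit M) (hMs : Mᵀ = M)
    (hr : r ≠ 0) :
    KSTLS A x r M * (KSTLS A x r M)ᵀ = M⁻¹ * WSTLS A x r * (WSTLS A x r)ᵀ * M⁻¹ ∧
      specNorm (KSTLS A x r M) = specNorm (M⁻¹ * WSTLS A x r) :=
  KSTLS_eq_W_form_general A x r M hMs hr
end

section
/- Let A ∈ ℝ^{m×n}, x ∈ ℝ^n, r ∈ ℝ^m nonzero, M symmetric invertible, and K the STLS derivative matrix K = M⁻¹(((2/‖r‖²)Aᵀ r rᵀ − Aᵀ)([xᵀ,−1] ⊗ I_m) − [I_n ⊗ rᵀ, 0_{n×m}]). Then M K Kᵀ M = (1+‖x‖²) Aᵀ A − Aᵀ r xᵀ − x rᵀ A + ‖r‖² I_n, using ([I_n ⊗ rᵀ, 0])([I_n ⊗ r; 0]) = ‖r‖² I_n and (I_n ⊗ rᵀ)(x ⊗ I_m) = x rᵀ. -/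
open Matrix Kronecker

noncomputable abbrev Rmat {m n : ℕ} (x : Fin n → ℝ) :
    Matrix (Fin m) ((Fin n ⊕ Unit) × Fin m) ℝ :=
  Matrix.reindex (Equiv.punitProd (Fin m)) (Equiv.refl _)
    (rowAug x ⊗ₖ (1 : Matrix (Fin m) (Fin m) ℝ))

noncomputable abbrev Qmat {m n : ℕ} (r : Fin m → ℝ) :
    Matrix (Fin n) ((Fin n ⊕ Unit) × Fin m) ℝ :=
  Matrix.reindex (Equiv.prodPUnit (Fin n))
    ((Equiv.sumProdDistrib (Fin n) Unit (Fin m)).symm)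
    (fromCols ((1 : Matrix (Fin n) (Fin n) ℝ) ⊗ₖ Matrix.of (fun (_ : Unit) k => r k))
      (0 : Matrix (Fin n × Unit) (Unit × Fin m) ℝ))

lemma vecMulVec_mul_vecMulVec' {n m p : Type*} [Fintype m] [Fintype n] [Fintype p]
    (u : n → ℝ) (v : m → ℝ) (w : m → ℝ) (z : p → ℝ) :
    vecMulVec u v * vecMulVec w z = (∑ k, v k * w k) • vecMulVec u z := by
  ext i j
  simp only [mul_apply, vecMulVec_apply, Matrix.smul_apply, smul_eq_mul]
  rw [Finset.sum_mul]
  exact Finset.sum_congr rfl fun k _ => by ring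

lemma vecMulVec_transpose' {n m : Type*} (u : n → ℝ) (v : m → ℝ) :
    (vecMulVec u v)ᵀ = vecMulVec v u := by
  ext i j; simp [vecMulVec_apply, mul_comm]

lemma RRT {m n : ℕ} (x : Fin n → ℝ) :
    Rmat (m := m) x * (Rmat (m := m) x)ᵀ = (1 + ∑ i, x i ^ 2) • (1 : Matrix (Fin m) (Fin m) ℝ) := by
  ext k l
  simp only [mul_apply, transpose_apply, Fintype.sum_prod_type, Rmat, reindex_apply,
    submatrix_apply, Equiv.refl_symm, Equiv.refl_apply, kroneckerMap_apply, Matrix.one_apply,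
    Fintype.sum_sum_type, rowAug, Matrix.of_apply, Sum.elim_inl, Sum.elim_inr,
    mul_ite, mul_one, mul_zero, ite_mul, zero_mul, Matrix.smul_apply, smul_eq_mul]
  by_cases h : k = l <;> simp [h, Finset.sum_ite_eq, pow_two] <;> ring

lemma RQT {m n : ℕ} (x : Fin n → ℝ) (r : Fin m → ℝ) :
    Rmat (m := m) x * (Qmat (n := n) r)ᵀ = vecMulVec r x := by
  ext k i
  simp only [mul_apply, transpose_apply, Fintype.sum_prod_type, Rmat, Qmat, reindex_apply,
    submatrix_apply, Equiv.refl_symm, Equiv.refl_apply, kroneckerMap_apply, Matrix.one_apply,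
    Fintype.sum_sum_type, rowAug, Matrix.of_apply, Sum.elim_inl, Sum.elim_inr,
    fromCols, Equiv.sumProdDistrib, Equiv.coe_fn_mk, Equiv.prodPUnit,
    mul_ite, mul_one, mul_zero, ite_mul, zero_mul, one_mul, vecMulVec_apply,
    Finset.sum_ite_eq, Finset.mem_univ, if_true, Equiv.symm_symm]
  simp [Matrix.one_apply, Finset.sum_ite_eq', mul_comm]

lemma QQT {m n : ℕ} (r : Fin m → ℝ) :
    Qmat (m := m) (n := n) r * (Qmat (n := n) r)ᵀ = (∑ k, r k ^ 2) • (1 : Matrix (Fin n) (Fin n) ℝ) := by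
  ext i j
  simp only [mul_apply, transpose_apply, Fintype.sum_prod_type, Qmat, reindex_apply,
    submatrix_apply, kroneckerMap_apply, Matrix.one_apply, Fintype.sum_sum_type,
    fromCols, Equiv.sumProdDistrib, Equiv.coe_fn_mk, Equiv.prodPUnit, Equiv.symm_symm,
    Matrix.of_apply, mul_ite, mul_one, mul_zero, ite_mul, zero_mul, one_mul,
    Matrix.smul_apply, smul_eq_mul]
  by_cases h : i = j <;> simp [h, Matrix.one_apply, Finset.sum_ite_eq, pow_two, ite_mul, mul_ite]

lemma enorm_sq {k : Type*} [Fintype k] (v : k → ℝ) : vecEnorm v ^ 2 = ∑ i, v i ^ 2 := by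
  rw [vecEnorm, Real.sq_sqrt]
  exact Finset.sum_nonneg fun i _ => sq_nonneg _

/-- `M K Kᵀ M = (1+‖x‖²)AᵀA − Aᵀr xᵀ − x rᵀA + ‖r‖²I` (equation (eqblk5)). -/
theorem M_KKT_M_eq_kernel {m n : ℕ} (A : Matrix (Fin m) (Fin n) ℝ) (x : Fin n → ℝ)
    (r : Fin m → ℝ) (M : Matrix (Fin n) (Fin n) ℝ) (hM : IsUnit M) (hMs : Mᵀ = M)
    (hr : r ≠ 0) :
    M * (KSTLS A x r M * (KSTLS A x r M)ᵀ) * M =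
      (1 + vecEnorm x ^ 2) • (Aᵀ * A) - Aᵀ * vecMulVec r x - vecMulVec x r * A +
        vecEnorm r ^ 2 • (1 : Matrix (Fin n) (Fin n) ℝ) := by
  have hd : IsUnit M.det := (Matrix.isUnit_iff_isUnit_det M).mp hM
  set s : ℝ := ∑ k, r k ^ 2 with hs_def
  have hs : s ≠ 0 := by
    intro h
    apply hr
    funext k
    have := (Finset.sum_eq_zero_iff_of_nonneg
      (fun i _ => sq_nonneg (r i))).mp h k (Finset.mem_univ k)
    exact pow_eq_zero_iff (by norm_num) |>.mp this
  have hers : vecEnorm r ^ 2 = s := enorm_sq r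
  set C : Matrix (Fin n) (Fin m) ℝ := (2 / vecEnorm r ^ 2) • (Aᵀ * vecMulVec r r) - Aᵀ with hC
  set B : Matrix (Fin n) ((Fin n ⊕ Unit) × Fin m) ℝ := C * Rmat (m := m) x - Qmat (n := n) r with hB
  have hK : KSTLS A x r M = M⁻¹ * B := rfl
  -- reduce LHS to B * Bᵀ
  have hL : M * (KSTLS A x r M * (KSTLS A x r M)ᵀ) * M = B * Bᵀ := by
    rw [hK, transpose_mul, transpose_nonsing_inv, hMs]
    calc M * (M⁻¹ * B * (Bᵀ * M⁻¹)) * M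
        = (M * M⁻¹) * (B * Bᵀ) * (M⁻¹ * M) := by
          simp only [Matrix.mul_assoc]
      _ = B * Bᵀ := by
          rw [Matrix.mul_nonsing_inv M hd, Matrix.nonsing_inv_mul M hd,
            Matrix.one_mul, Matrix.mul_one]
  rw [hL]
  -- key products with V := vecMulVec r r
  have hVV : vecMulVec r r * vecMulVec r r = s • vecMulVec r r := by
    rw [vecMulVec_mul_vecMulVec']
    congr 1
    exact Finset.sum_congr rfl fun k _ => (pow_two (r k)).symm
  have hVrx : vecMulVec r r * vecMulVec r x = s • vecMulVec r x := by
    rw [vecMulVec_mul_vecMulVec']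
    congr 1
    exact Finset.sum_congr rfl fun k _ => (pow_two (r k)).symm
  have hxrV : vecMulVec x r * vecMulVec r r = s • vecMulVec x r := by
    rw [vecMulVec_mul_vecMulVec']
    congr 1
    exact Finset.sum_congr rfl fun k _ => (pow_two (r k)).symm
  have hCt : Cᵀ = (2 / s) • (vecMulVec r r * A) - A := by
    rw [hC, transpose_sub, transpose_smul, transpose_mul, transpose_transpose,
      vecMulVec_transpose', hers]
  -- C * Cᵀ = Aᵀ * A
  have hCCt : C * Cᵀ = Aᵀ * A := by
    rw [hC, hCt, hers]
    simp only [Matrix.sub_mul, Matrix.mul_sub, Matrix.smul_mul, Matrix.mul_smul, smul_smul,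
      Matrix.mul_assoc]
    have e1 : vecMulVec r r * (vecMulVec r r * A) = s • (vecMulVec r r * A) := by
      rw [← Matrix.mul_assoc, hVV, Matrix.smul_mul]
    rw [e1]
    simp only [Matrix.mul_smul, smul_smul, smul_sub]
    match_scalars <;> (field_simp; try norm_num)
  -- C * vecMulVec r x = Aᵀ * vecMulVec r x
  have hCvrx : C * vecMulVec r x = Aᵀ * vecMulVec r x := by
    rw [hC, hers, Matrix.sub_mul, Matrix.smul_mul, Matrix.mul_assoc, hVrx, Matrix.mul_smul,
      smul_smul, div_mul_cancel₀ _ hs]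
    rw [two_smul]
    abel
  -- vecMulVec x r * Cᵀ = vecMulVec x r * A
  have hvxrCt : vecMulVec x r * Cᵀ = vecMulVec x r * A := by
    rw [hCt, Matrix.mul_sub, Matrix.mul_smul, ← Matrix.mul_assoc, hxrV, Matrix.smul_mul,
      smul_smul, div_mul_cancel₀ _ hs]
    rw [two_smul]
    abel
  -- expand B * Bᵀ
  have hQRT : Qmat (n := n) r * (Rmat (m := m) x)ᵀ = vecMulVec x r := by
    have := congrArg Matrix.transpose (RQT (m := m) (n := n) x r)
    rwa [transpose_mul, transpose_transpose, vecMulVec_transpose'] at this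
  rw [hB, transpose_sub, transpose_mul, Matrix.sub_mul, Matrix.mul_sub, Matrix.mul_sub]
  have e2 : C * Rmat (m := m) x * ((Rmat (m := m) x)ᵀ * Cᵀ) = (1 + ∑ i, x i ^ 2) • (Aᵀ * A) := by
    rw [Matrix.mul_assoc C, ← Matrix.mul_assoc (Rmat (m := m) x), RRT, Matrix.smul_mul,
      Matrix.one_mul, Matrix.mul_smul, hCCt]
  have e3 : C * Rmat (m := m) x * (Qmat (n := n) r)ᵀ = Aᵀ * vecMulVec r x := by
    rw [Matrix.mul_assoc, RQT, hCvrx]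
  have e4 : Qmat (n := n) r * ((Rmat (m := m) x)ᵀ * Cᵀ) = vecMulVec x r * A := by
    rw [← Matrix.mul_assoc (Qmat (n := n) r) (Rmat (m := m) x)ᵀ Cᵀ, hQRT, hvxrCt]
  rw [e2, e3, e4, QQT, enorm_sq, enorm_sq, ← hs_def]
  abel
end
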